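/- arXiv:2006.13341 — 3 statements merged into one kernel-verified Lean document; each statement's English description precedes it below -/
import Mathlib

section
/- Let C ∈ ℝ^{n×n} with ‖C‖ < 1 (operator norm), μ ∈ ℝⁿ, and M = [[C, μ],[0ᵀ, 0]]. Then the series Σ_{m=1}^{∞} ((−1)^{m−1}/m) M^m converges, the series L(C) = Σ_{m=1}^{∞} ((−1)^{m−1}/m) C^m and N(C) = Σ_{m=1}^{∞} ((−1)^{m−1}/m) C^{m−1} converge, and Σ_{m=1}^{∞} ((−1)^{m−1}/m) M^m = [[L(C), N(C)μ],[0ᵀ, 0]]. If in addition C is invertible, then N(C)μ = C⁻¹ L(C) μ. -/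
/-!
Since `M ^ (m + 1) = [[C ^ (m + 1), C ^ m μ], [0ᵀ, 0]]`, the logarithm series of `M` splits
blockwise into `L(C)` and `N(C) μ`. The coefficients `(-1) ^ (m - 1) / m` have absolute value at
most `1`, so all series are dominated by the geometric series of `‖C‖ < 1`. Finally
`C N(C) = L(C)` termwise, which gives `N(C) μ = C⁻¹ L(C) μ` for invertible `C`.
-/

open Matrix
open scoped Matrix.Norms.L2Operator

/-- The block matrix `M = [[C, μ],[0ᵀ, 0]]`. -/
def blockM {n : ℕ} (C : Matrix (Fin n) (Fin n) ℝ) (μ : Fin n → ℝ) :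
    Matrix (Fin n ⊕ Fin 1) (Fin n ⊕ Fin 1) ℝ :=
  Matrix.fromBlocks C (Matrix.of fun i (_ : Fin 1) => μ i) 0 0

theorem norm_neg_one_pow_pred_div_le_one (m : ℕ) : ‖(-1 : ℝ) ^ (m - 1) / (m : ℝ)‖ ≤ 1 := by
  rcases m with _ | m
  · simp
  · rw [norm_div, norm_pow, norm_neg, norm_one, one_pow, Real.norm_natCast]
    exact div_le_one_of_le₀ (by simp) (Nat.cast_nonneg _)

section Algebra

variable {𝕜 R : Type*} [CommSemiring 𝕜] [Semiring R] [Algebra 𝕜 R] [TopologicalSpace R]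
  [IsTopologicalSemiring R] [T2Space R] {c : ℕ → 𝕜} {x : R}

theorem mul_tsum_smul_pow_pred (hc0 : c 0 = 0) (hs : Summable fun m => c m • x ^ (m - 1)) :
    x * ∑' m, c m • x ^ (m - 1) = ∑' m, c m • x ^ m := by
  rw [← hs.tsum_mul_left]
  refine tsum_congr fun m => ?_
  rcases m with _ | m
  · simp [hc0]
  · rw [mul_smul_comm, Nat.add_sub_cancel, ← pow_succ']

end Algebra

section NormedAlgebra

variable {𝕜 R : Type*} [NormedField 𝕜] [NormedRing R] [NormedAlgebra 𝕜 R] [CompleteSpace R]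
  {c : ℕ → 𝕜} {x : R}

theorem summable_smul_pow_of_norm_le_one (hc : ∀ m, ‖c m‖ ≤ 1) (hx : ‖x‖ < 1) :
    Summable fun m => c m • x ^ m :=
  .of_norm_bounded (summable_norm_geometric_of_norm_lt_one hx) fun m => by
    rw [norm_smul]
    exact mul_le_of_le_one_left (norm_nonneg _) (hc m)

theorem summable_smul_pow_pred_of_norm_le_one (hc : ∀ m, ‖c m‖ ≤ 1) (hx : ‖x‖ < 1) :
    Summable fun m => c m • x ^ (m - 1) :=
  (summable_nat_add_iff 1).mp <| by
    simpa using summable_smul_pow_of_norm_le_one (fun m => hc (m + 1)) hx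

end NormedAlgebra

theorem Matrix.fromBlocks_zero_zero_pow_succ {l m α : Type*} [Fintype l] [Fintype m]
    [DecidableEq l] [DecidableEq m] [Semiring α] (A : Matrix l l α) (B : Matrix l m α) (k : ℕ) :
    (fromBlocks A B 0 0 : Matrix (l ⊕ m) (l ⊕ m) α) ^ (k + 1) =
      fromBlocks (A ^ (k + 1)) (A ^ k * B) 0 0 := by
  induction k with
  | zero => simp
  | succ k ih =>
    rw [pow_succ, ih, fromBlocks_multiply]
    simp [← pow_succ]

section HasSum

variable {X l m n o R : Type*} [TopologicalSpace R]

theorem HasSum.matrix_fromBlocks [AddCommMonoid R] {f₁ : X → Matrix n l R}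
    {f₂ : X → Matrix n m R} {f₃ : X → Matrix o l R} {f₄ : X → Matrix o m R}
    {a₁ : Matrix n l R} {a₂ : Matrix n m R} {a₃ : Matrix o l R} {a₄ : Matrix o m R}
    (h₁ : HasSum f₁ a₁) (h₂ : HasSum f₂ a₂) (h₃ : HasSum f₃ a₃) (h₄ : HasSum f₄ a₄) :
    HasSum (fun x => fromBlocks (f₁ x) (f₂ x) (f₃ x) (f₄ x)) (fromBlocks a₁ a₂ a₃ a₄) := by
  refine Pi.hasSum.2 fun i => Pi.hasSum.2 fun j => ?_
  rcases i with i | i <;> rcases j with j | j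
  · exact Pi.hasSum.1 (Pi.hasSum.1 h₁ i) j
  · exact Pi.hasSum.1 (Pi.hasSum.1 h₂ i) j
  · exact Pi.hasSum.1 (Pi.hasSum.1 h₃ i) j
  · exact Pi.hasSum.1 (Pi.hasSum.1 h₄ i) j

theorem HasSum.matrix_mulVec [Fintype n] [NonUnitalNonAssocSemiring R] [IsTopologicalSemiring R]
    {f : X → Matrix m n R} {a : Matrix m n R} (hf : HasSum f a) (v : n → R) :
    HasSum (fun x => f x *ᵥ v) (a *ᵥ v) :=
  hf.map (mulVec.addMonoidHomLeft v) (continuous_id.matrix_mulVec continuous_const)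

end HasSum

section blockM

variable {n : ℕ} (C : Matrix (Fin n) (Fin n) ℝ) (μ : Fin n → ℝ)

theorem blockM_pow_succ (k : ℕ) : blockM C μ ^ (k + 1) = blockM (C ^ (k + 1)) (C ^ k *ᵥ μ) := by
  rw [blockM, fromBlocks_zero_zero_pow_succ, blockM]
  rfl

theorem smul_blockM (r : ℝ) : r • blockM C μ = blockM (r • C) (r • μ) := by
  rw [blockM, fromBlocks_smul, blockM]
  congr 1 <;> ext <;> simp

theorem smul_blockM_pow {c : ℕ → ℝ} (hc0 : c 0 = 0) (m : ℕ) :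
    c m • blockM C μ ^ m = blockM (c m • C ^ m) ((c m • C ^ (m - 1)) *ᵥ μ) := by
  rcases m with _ | m
  · simp only [hc0, zero_smul, zero_mulVec]
    exact fromBlocks_zero.symm
  · rw [blockM_pow_succ, smul_blockM, Nat.add_sub_cancel, smul_mulVec]

variable {C μ}

theorem HasSum.blockM {X : Type*} {f : X → Matrix (Fin n) (Fin n) ℝ} {v : X → Fin n → ℝ}
    (hf : HasSum f C) (hv : HasSum v μ) :
    HasSum (fun x => _root_.blockM (f x) (v x)) (_root_.blockM C μ) :=
  hf.matrix_fromBlocks (Pi.hasSum.2 fun i => Pi.hasSum.2 fun _ => Pi.hasSum.1 hv i)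
    hasSum_zero hasSum_zero

end blockM

/-- if `‖C‖ < 1` (operator norm) then the logarithm series of
`M = [[C, μ],[0ᵀ, 0]]` converges, the series `L(C) = Σ_{m≥1} ((−1)^{m−1}/m) C^m` and
`N(C) = Σ_{m≥1} ((−1)^{m−1}/m) C^{m−1}` converge, and
`Σ_{m≥1} ((−1)^{m−1}/m) M^m = [[L(C), N(C)μ],[0ᵀ, 0]]`; if moreover `C` is invertible then
`N(C)μ = C⁻¹ L(C) μ`.  (All series are indexed over `ℕ`; the `m = 0` coefficient
`(−1)^{0−1}/0 = 0` vanishes, so these sums are exactly the sums over `m ≥ 1`.) -/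
theorem blockM_log_series {n : ℕ} (C : Matrix (Fin n) (Fin n) ℝ) (μ : Fin n → ℝ)
    (hC : ‖C‖ < 1) :
    Summable (fun m : ℕ => ((-1 : ℝ) ^ (m - 1) / (m : ℝ)) • blockM C μ ^ m) ∧
    Summable (fun m : ℕ => ((-1 : ℝ) ^ (m - 1) / (m : ℝ)) • C ^ m) ∧
    Summable (fun m : ℕ => ((-1 : ℝ) ^ (m - 1) / (m : ℝ)) • C ^ (m - 1)) ∧
    (∑' m : ℕ, ((-1 : ℝ) ^ (m - 1) / (m : ℝ)) • blockM C μ ^ m) =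
      blockM (∑' m : ℕ, ((-1 : ℝ) ^ (m - 1) / (m : ℝ)) • C ^ m)
        ((∑' m : ℕ, ((-1 : ℝ) ^ (m - 1) / (m : ℝ)) • C ^ (m - 1)) *ᵥ μ) ∧
    (IsUnit C →
      (∑' m : ℕ, ((-1 : ℝ) ^ (m - 1) / (m : ℝ)) • C ^ (m - 1)) *ᵥ μ =
        (C⁻¹ * ∑' m : ℕ, ((-1 : ℝ) ^ (m - 1) / (m : ℝ)) • C ^ m) *ᵥ μ) := by
  have hc0 : (-1 : ℝ) ^ (0 - 1) / ((0 : ℕ) : ℝ) = 0 := by simp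
  have hL := summable_smul_pow_of_norm_le_one norm_neg_one_pow_pred_div_le_one hC
  have hN := summable_smul_pow_pred_of_norm_le_one norm_neg_one_pow_pred_div_le_one hC
  have hM := (hL.hasSum.blockM (hN.hasSum.matrix_mulVec μ)).congr_fun (smul_blockM_pow C μ hc0)
  refine ⟨hM.summable, hL, hN, hM.tsum_eq, fun hU => ?_⟩
  rw [← mul_tsum_smul_pow_pred hc0 hN]
  exact congrArg (· *ᵥ μ)
    (nonsing_inv_mul_cancel_left _ _ ((isUnit_iff_isUnit_det C).mp hU)).symm
end

section
/- The matrix exponential exp maps the set A(n+1) = {[[X, t],[0ᵀ, 0]] : X ∈ ℝ^{n×n} upper triangular, t ∈ ℝⁿ} bijectively onto the set A⁺(n+1) = {[[Z, μ],[0ᵀ, 1]] : Z ∈ ℝ^{n×n} upper triangular with positive diagonal entries, μ ∈ ℝⁿ}. -/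
open Matrix
open scoped Matrix.Norms.L2Operator

/-- The matrix exponential `exp B = Σ_{k≥0} (1/k!) Bᵏ`. -/
noncomputable def mexp {n : ℕ} (B : Matrix (Fin n ⊕ Fin 1) (Fin n ⊕ Fin 1) ℝ) :
    Matrix (Fin n ⊕ Fin 1) (Fin n ⊕ Fin 1) ℝ :=
  ∑' k : ℕ, ((k.factorial : ℝ))⁻¹ • B ^ k

/-- `A(n+1)`: block matrices `[[X, t],[0ᵀ, 0]]` with `X` upper triangular. -/
def algSet (n : ℕ) : Set (Matrix (Fin n ⊕ Fin 1) (Fin n ⊕ Fin 1) ℝ) :=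
  {M | ∃ (X : Matrix (Fin n) (Fin n) ℝ) (t : Fin n → ℝ),
    (∀ i j, j < i → X i j = 0) ∧
    M = Matrix.fromBlocks X (Matrix.of fun i (_ : Fin 1) => t i) 0 0}

/-- `A⁺(n+1)`: block matrices `[[Z, μ],[0ᵀ, 1]]` with `Z` upper triangular with
positive diagonal. -/
def grpSet (n : ℕ) : Set (Matrix (Fin n ⊕ Fin 1) (Fin n ⊕ Fin 1) ℝ) :=
  {M | ∃ (Z : Matrix (Fin n) (Fin n) ℝ) (μ : Fin n → ℝ),
    (∀ i j, j < i → Z i j = 0) ∧ (∀ i, 0 < Z i i) ∧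
    M = Matrix.fromBlocks Z (Matrix.of fun i (_ : Fin 1) => μ i) 0 1}

/-!
Write `M = [[X, t], [0, 0]]`. Then `exp M = [[exp X, φ₁(X) t], [0, 1]]` with
`φ₁(X) = Σ Xᵏ / (k+1)!`, and for upper triangular `X` the matrix `φ₁(X)` is upper triangular with
diagonal entries `φ₁(xᵢᵢ) ≠ 0` (as `x φ₁(x) = eˣ - 1`), hence invertible. So everything reduces to
`exp` mapping upper triangular `n × n` matrices bijectively onto those with positive diagonal.
This follows by induction on `n`: an upper triangular `(n+1) × (n+1)` matrix differs by a scalar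
matrix `d • 1` from one of the block form above, and `exp (M + d • 1) = exp d • exp M`.
-/

open NormedSpace Set
open scoped Nat

section PhiOne

variable {𝔸 : Type*}

noncomputable def phiOne [Ring 𝔸] [Algebra ℝ 𝔸] [TopologicalSpace 𝔸] (x : 𝔸) : 𝔸 :=
  ∑' k : ℕ, ((k + 1)! : ℝ)⁻¹ • x ^ k

variable [NormedRing 𝔸] [NormedAlgebra ℝ 𝔸] [CompleteSpace 𝔸]

theorem hasSum_phiOne (x : 𝔸) : HasSum (fun k : ℕ => ((k + 1)! : ℝ)⁻¹ • x ^ k) (phiOne x) := by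
  refine (Summable.of_norm_bounded (norm_expSeries_summable' (𝕂 := ℝ) x) fun k => ?_).hasSum
  rw [norm_smul, norm_smul]
  gcongr
  simp only [norm_inv, Real.norm_natCast]
  gcongr
  exact k.le_succ

theorem hasSum_exp_sub_one (x : 𝔸) :
    HasSum (fun k : ℕ => ((k + 1)! : ℝ)⁻¹ • x ^ (k + 1)) (exp x - 1) := by
  simpa using (hasSum_nat_add_iff' 1).2 (exp_series_hasSum_exp' (𝕂 := ℝ) x)

theorem phiOne_mul (x : 𝔸) : phiOne x * x = exp x - 1 :=
  ((hasSum_phiOne x).mul_right x).unique <| by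
    simpa only [smul_mul_assoc, ← pow_succ] using hasSum_exp_sub_one x

theorem phiOne_zero : phiOne (0 : 𝔸) = 1 := by
  simpa using (hasSum_phiOne (0 : 𝔸)).unique (hasSum_single 0 fun k hk => by simp [hk])

end PhiOne

theorem phiOne_ne_zero (x : ℝ) : phiOne x ≠ 0 := by
  intro h
  have hx := phiOne_mul x
  rw [h, zero_mul, eq_comm, sub_eq_zero, ← Real.exp_eq_exp_ℝ, Real.exp_eq_one_iff] at hx
  simp [hx, phiOne_zero] at h

namespace Matrix

section Triangular

variable {m R : Type*} [Fintype m] [LinearOrder m]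

theorem IsUpperTriangular.mul_apply_self [NonUnitalNonAssocSemiring R] {M N : Matrix m m R}
    (hM : M.IsUpperTriangular) (hN : N.IsUpperTriangular) (i : m) :
    (M * N) i i = M i i * N i i := by
  rw [mul_apply]
  refine Finset.sum_eq_single i (fun j _ hji => ?_) (by simp)
  rcases hji.lt_or_gt with hj | hj
  · rw [hM hj, zero_mul]
  · rw [hN hj, mul_zero]

variable [DecidableEq m] [Semiring R]

theorem IsUpperTriangular.pow_apply_self {M : Matrix m m R} (hM : M.IsUpperTriangular) (k : ℕ)
    (i : m) : (M ^ k) i i = M i i ^ k := by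
  induction k with
  | zero => simp
  | succ k ih => rw [pow_succ, IsUpperTriangular.mul_apply_self (hM.pow k) hM, ih, pow_succ]

variable [TopologicalSpace R] {M S : Matrix m m R} {c : ℕ → R}

theorem IsUpperTriangular.hasSum_apply_self (hM : M.IsUpperTriangular)
    (h : HasSum (fun k => c k • M ^ k) S) (i : m) :
    HasSum (fun k => c k * M i i ^ k) (S i i) := by
  simpa [hM.pow_apply_self] using Pi.hasSum.1 (Pi.hasSum.1 h i) i

theorem IsUpperTriangular.of_hasSum_smul_pow [T2Space R] (hM : M.IsUpperTriangular)
    (h : HasSum (fun k => c k • M ^ k) S) : S.IsUpperTriangular := fun i j hji =>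
  (Pi.hasSum.1 (Pi.hasSum.1 h i) j).unique <| by simp [(hM.pow _) hji]

end Triangular

variable {m p : Type*} [Fintype m] [DecidableEq m] [Fintype p] [DecidableEq p]

section PhiOne

variable [LinearOrder m] {X : Matrix m m ℝ}

theorem isUpperTriangular_phiOne (hX : X.IsUpperTriangular) : (phiOne X).IsUpperTriangular :=
  hX.of_hasSum_smul_pow (hasSum_phiOne X)

theorem phiOne_apply_self (hX : X.IsUpperTriangular) (i : m) :
    phiOne X i i = phiOne (X i i) :=
  (hX.hasSum_apply_self (hasSum_phiOne X) i).unique (by simpa using hasSum_phiOne (X i i))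

theorem isUnit_det_phiOne (hX : X.IsUpperTriangular) : IsUnit (phiOne X).det := by
  rw [det_of_isUpperTriangular (isUpperTriangular_phiOne hX)]
  exact IsUnit.mk0 _ <| Finset.prod_ne_zero_iff.2 fun i _ => by
    rw [phiOne_apply_self hX]; exact phiOne_ne_zero _

end PhiOne

theorem exp_fromBlocks_zero (X : Matrix m m ℝ) (T : Matrix m p ℝ) :
    exp (fromBlocks X T 0 0) = fromBlocks (exp X) (phiOne X * T) 0 (1 : Matrix p p ℝ) := by
  set E := fromBlocks X T 0 0
  have hpow (k : ℕ) : E ^ (k + 1) = fromBlocks (X ^ k) 0 0 0 * E := by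
    induction k with
    | zero => simp [E, fromBlocks_multiply]
    | succ k ih => rw [pow_succ', ih, ← mul_assoc]; simp [E, fromBlocks_multiply, pow_succ']
  have hsum : HasSum (fun k : ℕ => ((k + 1)! : ℝ)⁻¹ • E ^ (k + 1))
      (fromBlocks (phiOne X) 0 0 0 * E) := by
    simp_rw [hpow, ← smul_mul_assoc]
    refine HasSum.mul_right _ ?_
    have := (hasSum_phiOne X).map
      (AddMonoidHom.mk' (fun Y : Matrix m m ℝ => (fromBlocks Y 0 0 0 : Matrix (m ⊕ p) (m ⊕ p) ℝ))
        fun Y Z => by simp [fromBlocks_add])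
      (continuous_id.matrix_fromBlocks continuous_const continuous_const continuous_const)
    simpa [Function.comp_def, fromBlocks_smul] using this
  rw [sub_eq_iff_eq_add.1 ((hasSum_exp_sub_one E).unique hsum), fromBlocks_multiply,
    ← fromBlocks_one, fromBlocks_add, phiOne_mul]
  simp

theorem exp_add_smul_one (M : Matrix m m ℝ) (c : ℝ) : exp (M + c • 1) = Real.exp c • exp M := by
  rw [← Algebra.algebraMap_eq_smul_one, exp_add_of_commute _ _ (Algebra.commute_algebraMap_right c M),
    ← algebraMap_exp_comm, ← Real.exp_eq_exp_ℝ, ← Algebra.commutes, Algebra.smul_def]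

end Matrix

section Triangular

variable {ι κ α : Type*}

def triangularMatrices [LT α] (b : ι → α) : Set (Matrix ι ι ℝ) := {M | M.BlockTriangular b}

def posTriangularMatrices [LT α] (b : ι → α) : Set (Matrix ι ι ℝ) :=
  {Z | Z.BlockTriangular b ∧ ∀ i, 0 < Z i i}

theorem smul_mem_posTriangularMatrices [LT α] {b : ι → α} {r : ℝ} (hr : 0 < r)
    {Z : Matrix ι ι ℝ} (hZ : Z ∈ posTriangularMatrices b) : r • Z ∈ posTriangularMatrices b :=
  ⟨fun i j hij => by simp [hZ.1 hij], fun i => mul_pos hr (hZ.2 i)⟩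

variable [Fintype ι] [DecidableEq ι] [Fintype κ] [DecidableEq κ]

theorem bijOn_exp_comp_equiv [LT α] {b : ι → α} (e : κ ≃ ι)
    (h : BijOn exp (triangularMatrices b) (posTriangularMatrices b)) :
    BijOn exp (triangularMatrices (b ∘ e)) (posTriangularMatrices (b ∘ e)) := by
  let R := reindexAlgEquiv ℝ ℝ e.symm
  have hR (s : Set (Matrix ι ι ℝ)) : R '' s = (fun M => M.submatrix e.symm e.symm) ⁻¹' s :=
    R.toEquiv.image_eq_preimage_symm s
  have hexp : Function.Semiconj R exp exp := fun M =>
    open scoped Matrix.Norms.Operator in map_exp R (continuous_id.matrix_reindex _ _) M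
  have := hexp.bijOn_image h R.injective.injOn
  rw [hR, hR] at this
  convert this using 1 <;> ext M
  · exact (blockTriangular_reindex_iff (M := M) (b := b) (e := e)).symm
  · exact and_congr (blockTriangular_reindex_iff (M := M) (b := b) (e := e)).symm
      (e.symm.forall_congr_right (q := fun i => 0 < M i i)).symm

theorem bijOn_exp_of_normalized [Preorder α] {b : ι → α} (ω : ι)
    (h : BijOn exp (triangularMatrices b ∩ {M | M ω ω = 0})
      (posTriangularMatrices b ∩ {Z | Z ω ω = 1})) :
    BijOn exp (triangularMatrices b) (posTriangularMatrices b) := by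
  have smul_one_mem (c : ℝ) : (c • 1 : Matrix ι ι ℝ) ∈ triangularMatrices b := by
    rw [smul_one_eq_diagonal]; exact blockTriangular_diagonal _
  have normalize {M} (hM : M ∈ triangularMatrices b) :
      M - M ω ω • 1 ∈ triangularMatrices b ∩ {M | M ω ω = 0} ∧
        exp M = Real.exp (M ω ω) • exp (M - M ω ω • 1) :=
    ⟨⟨BlockTriangular.sub hM (smul_one_mem _), by simp⟩,
      by rw [← exp_add_smul_one, sub_add_cancel]⟩
  have exp_apply_self {M} (hM : M ∈ triangularMatrices b) : exp M ω ω = Real.exp (M ω ω) := by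
    rw [(normalize hM).2, Matrix.smul_apply, (h.mapsTo (normalize hM).1).2, smul_eq_mul, mul_one]
  refine ⟨fun M hM => ?_, fun M hM M' hM' hMM' => ?_, fun Z hZ => ?_⟩
  · rw [(normalize hM).2]
    exact smul_mem_posTriangularMatrices (Real.exp_pos _) (h.mapsTo (normalize hM).1).1
  · have hω : M ω ω = M' ω ω := by
      rw [← Real.exp_eq_exp, ← exp_apply_self hM, ← exp_apply_self hM', hMM']
    have := h.injOn (normalize hM).1 (normalize hM').1 <| smul_right_injective _
      (Real.exp_pos (M ω ω)).ne' <| by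
        beta_reduce; rw [← (normalize hM).2, hMM', (normalize hM').2, hω]
    rwa [hω, sub_left_inj] at this
  · set z := Z ω ω
    have hz : 0 < z := hZ.2 ω
    obtain ⟨N, ⟨hN, -⟩, hNZ⟩ := h.surjOn
      ⟨smul_mem_posTriangularMatrices (inv_pos.2 hz) hZ, by simp [z, hz.ne']⟩
    refine ⟨N + Real.log z • 1, BlockTriangular.add hN (smul_one_mem _), ?_⟩
    rw [exp_add_smul_one, Real.exp_log hz, hNZ, smul_inv_smul₀ hz.ne']

end Triangular

section AffineGroup

variable {n : ℕ}

theorem blockTriangular_finSumFinEquiv_iff {R : Type*} [Zero R]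
    {M : Matrix (Fin n ⊕ Fin 1) (Fin n ⊕ Fin 1) R} :
    M.BlockTriangular finSumFinEquiv ↔
      (∀ i j, j < i → M (.inl i) (.inl j) = 0) ∧ ∀ i j, M (.inr i) (.inl j) = 0 := by
  refine ⟨fun h => ⟨fun i j hij => h hij, fun i j => h (by simp [Fin.lt_def])⟩,
    fun ⟨h₁, h₂⟩ => ?_⟩
  rintro (i | i) (j | j) hij
  · exact h₁ i j hij
  · simp [Fin.lt_def] at hij; omega
  · exact h₂ i j
  · simp [Fin.lt_def] at hij

theorem algSet_eq :
    algSet n = triangularMatrices finSumFinEquiv ∩ {M | M (.inr 0) (.inr 0) = 0} := by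
  ext M
  simp only [algSet, triangularMatrices, mem_inter_iff, mem_ofPred_eq,
    blockTriangular_finSumFinEquiv_iff]
  constructor
  · rintro ⟨X, t, hX, rfl⟩
    simpa using hX
  · rintro ⟨⟨hX, h0⟩, hω⟩
    refine ⟨M.toBlocks₁₁, fun i => M (.inl i) (.inr 0), hX, ?_⟩
    ext (i | i) (j | j) <;> simp [Fin.fin_one_eq_zero, toBlocks₁₁, hω, h0]

theorem grpSet_eq :
    grpSet n = posTriangularMatrices finSumFinEquiv ∩ {Z | Z (.inr 0) (.inr 0) = 1} := by
  ext Z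
  simp only [grpSet, posTriangularMatrices, mem_inter_iff, mem_ofPred_eq,
    blockTriangular_finSumFinEquiv_iff]
  constructor
  · rintro ⟨Z, μ, hZ, hpos, rfl⟩
    refine ⟨⟨⟨fun i j hij => by simp [hZ i j hij], by simp⟩, ?_⟩, by simp⟩
    rintro (i | i) <;> simp [hpos]
  · rintro ⟨⟨⟨hZ, h0⟩, hpos⟩, hω⟩
    refine ⟨Z.toBlocks₁₁, fun i => Z (.inl i) (.inr 0), hZ, fun i => hpos (.inl i), ?_⟩
    ext (i | i) (j | j) <;> simp [Fin.fin_one_eq_zero, toBlocks₁₁, hω, h0]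

theorem bijOn_exp_algSet
    (h : BijOn exp (triangularMatrices (id : Fin n → Fin n)) (posTriangularMatrices id)) :
    BijOn exp (algSet n) (grpSet n) := by
  refine ⟨?_, ?_, ?_⟩
  · rintro _ ⟨X, t, hX, rfl⟩
    obtain ⟨hZ, hpos⟩ := h.mapsTo (show X ∈ triangularMatrices id from fun i j => hX i j)
    rw [exp_fromBlocks_zero]
    exact ⟨exp X, phiOne X *ᵥ t, fun i j => @hZ i j, hpos,
      congrArg (fromBlocks _ · 0 1) (replicateCol_mulVec _ t).symm⟩
  · rintro _ ⟨X, t, hX, rfl⟩ _ ⟨X', t', hX', rfl⟩ hexp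
    rw [exp_fromBlocks_zero, exp_fromBlocks_zero, fromBlocks_inj] at hexp
    obtain rfl : X = X' := h.injOn (fun i j => hX i j) (fun i j => hX' i j) hexp.1
    let := (phiOne X).invertibleOfIsUnitDet (isUnit_det_phiOne fun i j => hX i j)
    exact congrArg (fromBlocks X · 0 0) (mul_right_injective_of_invertible _ hexp.2.1)
  · rintro _ ⟨Z, μ, hZ, hpos, rfl⟩
    obtain ⟨X, hX, rfl⟩ := h.surjOn ⟨fun i j => hZ i j, hpos⟩
    refine ⟨_, ⟨X, (phiOne X)⁻¹ *ᵥ μ, fun i j => @hX i j, rfl⟩, ?_⟩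
    rw [exp_fromBlocks_zero]
    exact congrArg (fromBlocks _ · 0 1) <| (congrArg _ (replicateCol_mulVec _ μ)).trans
      (mul_nonsing_inv_cancel_left _ _ (isUnit_det_phiOne hX))

theorem bijOn_exp_upperTriangular :
    ∀ n, BijOn exp (triangularMatrices (id : Fin n → Fin n)) (posTriangularMatrices id)
  | 0 => ⟨fun _ _ => ⟨fun i => i.elim0, fun i => i.elim0⟩, fun _ _ _ _ _ => Subsingleton.elim _ _,
      fun Z _ => ⟨Z, fun i => i.elim0, Subsingleton.elim _ _⟩⟩
  | n + 1 => by
    have h := bijOn_exp_algSet (bijOn_exp_upperTriangular n)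
    rw [algSet_eq, grpSet_eq] at h
    simpa using bijOn_exp_comp_equiv finSumFinEquiv.symm (bijOn_exp_of_normalized _ h)

end AffineGroup

/-- the matrix exponential maps `A(n+1)` bijectively onto `A⁺(n+1)`. -/
theorem exp_bijOn_algSet_grpSet (n : ℕ) :
    Set.BijOn mexp (algSet n) (grpSet n) := by
  have : (mexp : Matrix (Fin n ⊕ Fin 1) (Fin n ⊕ Fin 1) ℝ → _) = exp := (exp_eq_tsum ℝ).symm
  rw [this]
  exact bijOn_exp_algSet (bijOn_exp_upperTriangular n)
end

section
/- Let p ∈ ℝᵐ, let L be a finite set of points of ℝᵐ not containing p, let σ > 0, and define the second-order orientation tensor T(p, L) = Σ_{s ∈ L} exp(−‖s − p‖₂²/σ²) · v̂_{ps} v̂_{ps}ᵀ, where v̂_{ps} = (s − p)/‖s − p‖₂. Then for every orthogonal matrix R ∈ ℝ^{m×m} and every t ∈ ℝᵐ, with ρ(x) = Rx + t, the tensor computed at ρ(p) over the transformed neighborhood ρ(L) = {ρ(s) : s ∈ L} satisfies T(ρ(p), ρ(L)) = R · T(p, L) · Rᵀ. -/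
open Matrix

/-! The translation cancels in `ρ s − ρ p = R (s − p)`; an orthogonal `R` preserves the norm, so
each weight and normalisation is unchanged, while the outer product of `R v` with itself is
`R (v vᵀ) Rᵀ`. Since `ρ` is injective, the sum over `ρ(L)` reindexes as a sum over `L`. -/

/-- The Euclidean norm `‖v‖₂ = √(Σⱼ vⱼ²)` on `ℝᵐ`. -/
noncomputable def enorm2 {m : ℕ} (v : Fin m → ℝ) : ℝ :=
  Real.sqrt (∑ j, v j ^ 2)

/-- The second-order orientation tensor
`T(p, L) = Σ_{s ∈ L} exp(−‖s − p‖₂²/σ²) · v̂_{ps} v̂_{ps}ᵀ`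
with `v̂_{ps} = (s − p)/‖s − p‖₂`. -/
noncomputable def orientTensor {m : ℕ} (σ : ℝ) (p : Fin m → ℝ)
    (L : Finset (Fin m → ℝ)) : Matrix (Fin m) (Fin m) ℝ :=
  ∑ s ∈ L, Real.exp (-(enorm2 (s - p)) ^ 2 / σ ^ 2) •
    Matrix.vecMulVec ((enorm2 (s - p))⁻¹ • (s - p)) ((enorm2 (s - p))⁻¹ • (s - p))

section Orthogonal

variable {n α : Type*} [Fintype n]

lemma mul_vecMulVec_mul_transpose [CommSemiring α] {l : Type*} (M N : Matrix l n α)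
    (x y : n → α) : M * vecMulVec x y * Nᵀ = vecMulVec (M *ᵥ x) (N *ᵥ y) := by
  rw [mul_vecMulVec, vecMulVec_mul, vecMul_transpose]

variable [DecidableEq n]

lemma dotProduct_mulVec_mulVec_of_transpose_mul_self [CommSemiring α] {R : Matrix n n α}
    (hR : Rᵀ * R = 1) (v : n → α) : (R *ᵥ v) ⬝ᵥ (R *ᵥ v) = v ⬝ᵥ v := by
  rw [dotProduct_mulVec, ← vecMul_transpose, vecMul_vecMul, hR, vecMul_one]

lemma injective_mulVec_add_of_transpose_mul_self [Ring α] {R : Matrix n n α}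
    (hR : Rᵀ * R = 1) (t : n → α) : Function.Injective fun s => R *ᵥ s + t := by
  have hleft : Function.LeftInverse (Rᵀ *ᵥ ·) (R *ᵥ ·) := fun s => by
    simp only [mulVec_mulVec, hR, one_mulVec]
  exact (add_left_injective t).comp hleft.injective

end Orthogonal

lemma enorm2_mulVec {m : ℕ} {R : Matrix (Fin m) (Fin m) ℝ} (hR : Rᵀ * R = 1)
    (v : Fin m → ℝ) : enorm2 (R *ᵥ v) = enorm2 v := by
  simpa only [enorm2, dotProduct, sq] using
    congrArg Real.sqrt (dotProduct_mulVec_mulVec_of_transpose_mul_self hR v)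

theorem orientTensor_rigid_general {m : ℕ} [DecidableEq (Fin m → ℝ)]
    (σ : ℝ) (p : Fin m → ℝ) (L : Finset (Fin m → ℝ))
    (R : Matrix (Fin m) (Fin m) ℝ) (hR : Rᵀ * R = 1) (t : Fin m → ℝ) :
    orientTensor σ (R *ᵥ p + t) (L.image fun s => R *ᵥ s + t) =
      R * orientTensor σ p L * Rᵀ := by
  unfold orientTensor
  rw [Finset.sum_image (injective_mulVec_add_of_transpose_mul_self hR t).injOn,
    Finset.mul_sum, Finset.sum_mul]
  refine Finset.sum_congr rfl fun s _ => ?_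
  rw [add_sub_add_right_eq_sub, ← mulVec_sub, enorm2_mulVec hR, ← mulVec_smul, Matrix.mul_smul,
    Matrix.smul_mul, mul_vecMulVec_mul_transpose]

/-- the orientation tensor is equivariant under rigid transformations:
for `ρ(x) = Rx + t` with `R` orthogonal, `T(ρ(p), ρ(L)) = R T(p, L) Rᵀ`. -/
theorem orientTensor_rigid {m : ℕ} [DecidableEq (Fin m → ℝ)]
    (σ : ℝ) (hσ : 0 < σ) (p : Fin m → ℝ) (L : Finset (Fin m → ℝ)) (hp : p ∉ L)
    (R : Matrix (Fin m) (Fin m) ℝ) (hR : Rᵀ * R = 1) (t : Fin m → ℝ) :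
    orientTensor σ (R *ᵥ p + t) (L.image fun s => R *ᵥ s + t) =
      R * orientTensor σ p L * Rᵀ :=
  orientTensor_rigid_general σ p L R hR t
end
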